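/- Let P, Q be orthogonal projections in generic position on H and set A = P - Q. Then the range of 1 - A² is closed if and only if P + Q - 1 is invertible in B(H). -/

import Mathlib

open ContinuousLinearMap

variable {H : Type*} [NormedAddCommGroup H] [InnerProductSpace ℂ H] [CompleteSpace H]

/-- An orthogonal projection: a selfadjoint idempotent bounded operator. -/
def IsOrthogonalProjection (P : H →L[ℂ] H) : Prop :=
  IsSelfAdjoint P ∧ P * P = P

/-- A symmetry: a selfadjoint unitary operator. -/
def IsSymmetry (V : H →L[ℂ] H) : Prop :=
  IsSelfAdjoint V ∧ V * V = 1

/-- Two orthogonal projections are in generic position if the four canonical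
intersections of their ranges and kernels are trivial. -/
def GenericPosition (P Q : H →L[ℂ] H) : Prop :=
  LinearMap.range (P : H →ₗ[ℂ] H) ⊓ LinearMap.range (Q : H →ₗ[ℂ] H) = ⊥ ∧
  LinearMap.range (P : H →ₗ[ℂ] H) ⊓ LinearMap.ker (Q : H →ₗ[ℂ] H) = ⊥ ∧
  LinearMap.ker (P : H →ₗ[ℂ] H) ⊓ LinearMap.range (Q : H →ₗ[ℂ] H) = ⊥ ∧
  LinearMap.ker (P : H →ₗ[ℂ] H) ⊓ LinearMap.ker (Q : H →ₗ[ℂ] H) = ⊥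

/-!
With `B = P + Q - 1`, idempotency of `P` and `Q` gives `1 - (P - Q)² = B²`. If `B x = 0` then
`P x + Q x = x`, so `P (Q x) = 0` and `Q (P x) = 0`; generic position then forces
`P x = Q x = 0`, hence `x = 0`. Thus `B²` is an injective selfadjoint operator, whose range is
dense because its orthogonal complement is the kernel. A closed dense range is everything, so
`B²` is invertible, and so is `B`, which commutes with itself.
-/

theorem IsIdempotentElem.one_sub_sub_mul_sub {R : Type*} [Ring R] {p q : R}
    (hp : IsIdempotentElem p) (hq : IsIdempotentElem q) :
    1 - (p - q) * (p - q) = (p + q - 1) * (p + q - 1) := by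
  simp only [mul_sub, sub_mul, add_mul, mul_add, mul_one, one_mul, hp.eq, hq.eq]
  abel

theorem LinearMap.ker_add_sub_one_eq_bot {R M : Type*} [Ring R] [AddCommGroup M] [Module R M]
    {f g : M →ₗ[R] M} (hf : IsIdempotentElem f) (hg : IsIdempotentElem g)
    (hfg : range f ⊓ ker g = ⊥) (hgf : ker f ⊓ range g = ⊥) :
    ker (f + g - 1) = ⊥ := by
  refine (Submodule.eq_bot_iff _).mpr fun x hx => ?_
  have hsum : f x + g x = x := by simpa [sub_eq_zero] using hx
  have hfgx : f (g x) = 0 := by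
    have := congrArg f hsum
    rwa [map_add, ← Module.End.mul_apply, hf.eq, add_eq_left] at this
  have hgfx : g (f x) = 0 := by
    have := congrArg g hsum
    rwa [map_add, ← Module.End.mul_apply g g, hg.eq, add_eq_right] at this
  have hgx : g x = 0 := (Submodule.eq_bot_iff _).mp hgf _ ⟨hfgx, x, rfl⟩
  have hfx : f x = 0 := (Submodule.eq_bot_iff _).mp hfg _ ⟨⟨x, rfl⟩, hgfx⟩
  rw [← hsum, hfx, hgx, add_zero]

theorem ContinuousLinearMap.IsStarNormal.isUnit_iff_isClosed_range {𝕜 E : Type*} [RCLike 𝕜]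
    [NormedAddCommGroup E] [InnerProductSpace 𝕜 E] [CompleteSpace E] {T : E →L[𝕜] E}
    [IsStarNormal T] (hT : T.ker = ⊥) : IsUnit T ↔ IsClosed (T.range : Set E) := by
  refine ⟨fun hunit => ?_, fun hclosed => ?_⟩
  · rw [LinearMap.range_eq_top.mpr (isUnit_iff_bijective.mp hunit).2]
    exact isClosed_univ
  · have : CompleteSpace T.range := hclosed.completeSpace_coe
    have hrange : T.range = ⊤ := by
      rw [← Submodule.orthogonal_eq_bot_iff, IsStarNormal.orthogonal_range ‹_›, hT]
    exact isUnit_iff_bijective.mpr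
      ⟨LinearMap.ker_eq_bot.mp hT, LinearMap.range_eq_top.mp hrange⟩

theorem closed_range_iff_sum_invertible (P Q : H →L[ℂ] H)
    (hP : IsOrthogonalProjection P) (hQ : IsOrthogonalProjection Q)
    (hgen : GenericPosition P Q) :
    IsClosed (LinearMap.range ((1 - (P - Q) * (P - Q) : H →L[ℂ] H) : H →ₗ[ℂ] H) : Set H) ↔
      IsUnit (P + Q - 1) := by
  set B := P + Q - 1
  have hB : IsSelfAdjoint B := (hP.1.add hQ.1).sub (.one _)
  have hkerB : B.ker = ⊥ := by
    simpa [B] using LinearMap.ker_add_sub_one_eq_bot (IsIdempotentElem.toLinearMap hP.2)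
      (IsIdempotentElem.toLinearMap hQ.2) hgen.2.1 hgen.2.2.1
  have hinjB : Function.Injective B := LinearMap.ker_eq_bot.mp hkerB
  have hkerBB : (B * B).ker = ⊥ := LinearMap.ker_eq_bot.mpr (hinjB.comp hinjB)
  have : IsStarNormal (B * B) := (hB.star_eq ▸ IsSelfAdjoint.star_mul_self B).isStarNormal
  rw [IsIdempotentElem.one_sub_sub_mul_sub hP.2 hQ.2, ← isUnit_mul_self_iff,
    IsStarNormal.isUnit_iff_isClosed_range hkerBB]
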